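/- arXiv:2011.00706 — 3 statements merged into one kernel-verified Lean document; each statement's English description precedes it below -/
import Mathlib

section
/- Let n be even and let π ∈ S_n have maximal strategic pile, i.e. |SP(π)| = n−1. If π(k) = n for some index k, then π(k+1) = 1 (indices read modulo n). -/
/-- The representative of `x : ZMod n` in `{1, …, n}` (so `0` represents `n`). -/
def repr1 (n : ℕ) (x : ZMod n) : ℕ := if x = 0 then n else x.val

/-- Values of `ZMod n`, embedded into `ZMod (n+1)` via representatives in `{1, …, n}`. -/
def emb (n : ℕ) (x : ZMod n) : ZMod (n + 1) := (repr1 n x : ZMod (n + 1))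

/-- `L 0 = 0` and `L i = π(i)` for `i ∈ {1,…,n}`: the listing used to build
the cycle `Y_π = (π(n) π(n−1) … π(1) 0)`. -/
def listFun (n : ℕ) (π : Equiv.Perm (ZMod n)) : ZMod (n + 1) → ZMod (n + 1) :=
  fun i => if i = 0 then 0 else emb n (π (i.val : ZMod n))

/-- The inverse listing of `listFun`. -/
def listInv (n : ℕ) (π : Equiv.Perm (ZMod n)) : ZMod (n + 1) → ZMod (n + 1) :=
  fun y => if y = 0 then 0 else emb n (π.symm (y.val : ZMod n))

/-- The cycle `Y_π = (π(n) π(n−1) … π(1) 0)` on `{0,1,…,n}`, as a function: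
it sends `L(i)` to `L(i-1)`. -/
def Yfun (n : ℕ) (π : Equiv.Perm (ZMod n)) : ZMod (n + 1) → ZMod (n + 1) :=
  fun y => listFun n π (listInv n π y - 1)

/-- `C_π = Y_π ∘ X_n`, where `X_n` is the cycle `(0 1 2 … n)`, i.e. `x ↦ x + 1`. -/
def Cfun (n : ℕ) (π : Equiv.Perm (ZMod n)) : ZMod (n + 1) → ZMod (n + 1) :=
  fun x => Yfun n π (x + 1)

/-- The strategic pile of `π ∈ S_n`: the set of values appearing strictly after `n` and
strictly before `0` on the cycle of `C_π` containing `0` and `n` (empty if `0` and `n`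
lie in different cycles). -/
def strategicPile (n : ℕ) (π : Equiv.Perm (ZMod n)) : Set (ZMod (n + 1)) :=
  {x | ∃ k m : ℕ, 0 < k ∧ k < m ∧ (Cfun n π)^[m] (n : ZMod (n + 1)) = 0 ∧
      (∀ j, 0 < j → j < m → (Cfun n π)^[j] (n : ZMod (n + 1)) ≠ 0) ∧
      (Cfun n π)^[k] (n : ZMod (n + 1)) = x}

/-- `π ∈ S_n` has maximal strategic pile. -/
def MaxPile (n : ℕ) (π : Equiv.Perm (ZMod n)) : Prop :=
  (Even n ∧ (strategicPile n π).ncard = n - 1) ∨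
  (Odd n ∧ (strategicPile n π).ncard = n - 2)

/-- The position (in `{1,…,n}`) of the value `v` in `π`. -/
def idx (n : ℕ) (π : Equiv.Perm (ZMod n)) (v : ZMod n) : ℕ := repr1 n (π.symm v)

/-- Word coordinate of the occurrence of the pointer `(p,p+1)` as the right pointer of the
entry `p`:  the entry at position `i` is given word coordinate `3*i - 1`, its left pointer
coordinate `3*i - 2` and its right pointer coordinate `3*i`. -/
def posR (n : ℕ) (π : Equiv.Perm (ZMod n)) (p : ZMod n) : ℕ := 3 * idx n π p

/-- Word coordinate of the occurrence of the pointer `(p,p+1)` as the left pointer of the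
entry `p+1`. -/
def posL (n : ℕ) (π : Equiv.Perm (ZMod n)) (p : ZMod n) : ℕ := 3 * idx n π (p + 1) - 2

/-- Two pairs of positions interleave (pattern `a b a b` or `b a b a`). -/
def Interleaved (a1 a2 b1 b2 : ℕ) : Prop :=
  (min a1 a2 < min b1 b2 ∧ min b1 b2 < max a1 a2 ∧ max a1 a2 < max b1 b2) ∨
  (min b1 b2 < min a1 a2 ∧ min a1 a2 < max b1 b2 ∧ max b1 b2 < max a1 a2)

/-- `(p, q)` is a valid pointer context for `π`: the two pointers are distinct and their
occurrences in the pointer word of `π` appear in the order `p,q,p,q` or `q,p,q,p`. -/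
def ValidContext (n : ℕ) (π : Equiv.Perm (ZMod n)) (p q : ZMod n) : Prop :=
  p ≠ q ∧ Interleaved (posR n π p) (posL n π p) (posR n π q) (posL n π q)

/-- The number of (unordered) valid pointer contexts of `π`. -/
noncomputable def numContexts (n : ℕ) (π : Equiv.Perm (ZMod n)) : ℕ :=
  {pq : ZMod n × ZMod n | ValidContext n π pq.1 pq.2}.ncard / 2

/-- `ρ ∈ S_{2n−1}` is the contraction of `π ∈ S_{2n}`, obtained by deleting the entry `2n`. -/
def IsContraction (n : ℕ) (ρ : Equiv.Perm (ZMod (2 * n - 1)))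
    (π : Equiv.Perm (ZMod (2 * n))) : Prop :=
  ∃ m : ℕ, 1 ≤ m ∧ m ≤ 2 * n ∧ π (m : ZMod (2 * n)) = ((2 * n : ℕ) : ZMod (2 * n)) ∧
    (∀ k : ℕ, 1 ≤ k → k < m →
      ρ (k : ZMod (2 * n - 1)) =
        ((repr1 (2 * n) (π (k : ZMod (2 * n))) : ℕ) : ZMod (2 * n - 1))) ∧
    (∀ k : ℕ, m ≤ k → k ≤ 2 * n - 1 →
      ρ (k : ZMod (2 * n - 1)) =
        ((repr1 (2 * n) (π ((k + 1 : ℕ) : ZMod (2 * n))) : ℕ) : ZMod (2 * n - 1)))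

/-- `M_{2n}`: the contractions of permutations in `S_{2n}` with maximal strategic pile. -/
def MsetAll (n : ℕ) : Set (Equiv.Perm (ZMod (2 * n - 1))) :=
  {ρ | ∃ π : Equiv.Perm (ZMod (2 * n)), MaxPile (2 * n) π ∧ IsContraction n ρ π}

/-- `M_{2n,k}`: the contractions of permutations in `S_{2n}` with maximal strategic pile
and exactly `k` valid pointer contexts. -/
def Mset (n k : ℕ) : Set (Equiv.Perm (ZMod (2 * n - 1))) :=
  {ρ | ρ ∈ MsetAll n ∧ numContexts (2 * n - 1) ρ = k}

/-- Cyclic shift by `a`: `C_a(π)(x) = π(x - a)`. -/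
def Cshift (n : ℕ) (a : ZMod n) (π : Equiv.Perm (ZMod n)) : Equiv.Perm (ZMod n) :=
  (Equiv.subRight a).trans π

/-- Translation by `b`: `T_b(π)(x) = π(x) + b`. -/
def Tshift (n : ℕ) (b : ZMod n) (π : Equiv.Perm (ZMod n)) : Equiv.Perm (ZMod n) :=
  π.trans (Equiv.addRight b)

/-- `φ(a,b,π) = C_a(T_b(π))`, i.e. `x ↦ π(x-a) + b`. -/
def phiAct (n : ℕ) (a b : ZMod n) (π : Equiv.Perm (ZMod n)) : Equiv.Perm (ZMod n) :=
  Cshift n a (Tshift n b π)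

/-- The difference sequence of `π`. -/
def Dseq (n : ℕ) (π : Equiv.Perm (ZMod n)) : ZMod n → ZMod n :=
  fun k => π (k + 1) - π k

/-- The difference sequence of `π` is periodic with (least) period `p`, `0 < p < n`. -/
def PeriodicWith (n : ℕ) (π : Equiv.Perm (ZMod n)) (p : ℕ) : Prop :=
  0 < p ∧ p < n ∧ (∀ k : ZMod n, Dseq n π (k + (p : ZMod n)) = Dseq n π k) ∧
    ∀ q : ℕ, 0 < q → q < p → ¬ ∀ k : ZMod n, Dseq n π (k + (q : ZMod n)) = Dseq n π k

/-!
If `|SP(π)| = n - 1`, the orbit of `n` under `C_π` runs through all `n + 1` points before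
reaching `0`, so the cycle closes with `C_π(0) = n`. On the other hand
`C_π(0) = Y_π(1)` is the entry of `π` just before the value `1` (or `0` if `1` stands first).
Hence `n` immediately precedes `1` in `π`.
-/

open Function

theorem Function.lt_minimalPeriod_of_iterate_ne {α : Type*} {f : α → α} {x y : α} {m : ℕ}
    (hx : x ∈ periodicPts f) (hxy : x ≠ y) (hm : f^[m] x = y)
    (hmin : ∀ j, 0 < j → j < m → f^[j] x ≠ y) : m < minimalPeriod f x := by
  by_contra! hle
  have hpos := minimalPeriod_pos_of_mem_periodicPts hx
  have hmod : f^[m % minimalPeriod f x] x = y := by rw [iterate_mod_minimalPeriod_eq, hm]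
  rcases Nat.eq_zero_or_pos (m % minimalPeriod f x) with h0 | hpos'
  · rw [h0] at hmod
    exact hxy hmod
  · exact hmin _ hpos' ((Nat.mod_lt _ hpos).trans_le hle) hmod

theorem Function.apply_eq_of_iterate_ne_of_card_eq {α : Type*} [Fintype α] {f : α → α}
    (hf : Injective f) {x y : α} {m : ℕ} (hcard : Fintype.card α = m + 1) (hxy : x ≠ y)
    (hm : f^[m] x = y) (hmin : ∀ j, 0 < j → j < m → f^[j] x ≠ y) : f y = x := by
  have hlt := lt_minimalPeriod_of_iterate_ne (hf.mem_periodicPts x) hxy hm hmin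
  have hper : minimalPeriod f x = m + 1 := le_antisymm (hcard ▸ minimalPeriod_le_card) hlt
  rw [← hm, ← iterate_succ_apply' f m x, Nat.succ_eq_add_one, ← hper, iterate_minimalPeriod]

section Embedding

variable {n : ℕ}

theorem emb_zero : emb n 0 = (n : ZMod (n + 1)) := by
  simp [emb, repr1]

variable [NeZero n]

theorem natCast_ne_zero_zmod_succ : (n : ZMod (n + 1)) ≠ 0 := by
  rw [Ne, ZMod.natCast_eq_zero_iff]
  exact fun h => NeZero.ne n (Nat.eq_zero_of_dvd_of_lt h n.lt_succ_self)

theorem repr1_pos (x : ZMod n) : 0 < repr1 n x := by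
  unfold repr1
  split_ifs with hx
  · exact Nat.pos_of_neZero n
  · exact Nat.pos_of_ne_zero ((ZMod.val_ne_zero x).mpr hx)

theorem repr1_le (x : ZMod n) : repr1 n x ≤ n := by
  unfold repr1
  split_ifs
  · exact le_rfl
  · exact (ZMod.val_lt x).le

theorem natCast_repr1 (x : ZMod n) : ((repr1 n x : ℕ) : ZMod n) = x := by
  unfold repr1
  split_ifs with hx
  · rw [ZMod.natCast_self, hx]
  · exact ZMod.natCast_zmod_val x

theorem repr1_natCast {i : ℕ} (hi : 0 < i) (hin : i ≤ n) : repr1 n (i : ZMod n) = i := by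
  rcases hin.eq_or_lt with rfl | hlt
  · simp [repr1]
  · have hval : (i : ZMod n).val = i := ZMod.val_cast_of_lt hlt
    rw [repr1, if_neg (fun h => by rw [h, ZMod.val_zero] at hval; omega), hval]

theorem emb_natCast {i : ℕ} (hi : 0 < i) (hin : i ≤ n) :
    emb n (i : ZMod n) = (i : ZMod (n + 1)) := by
  rw [emb, repr1_natCast hi hin]

theorem emb_one : emb n 1 = 1 := by
  simpa using emb_natCast (n := n) one_pos NeZero.one_le

theorem val_emb (x : ZMod n) : (emb n x).val = repr1 n x :=
  ZMod.val_cast_of_lt (Nat.lt_succ_of_le (repr1_le x))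

theorem emb_ne_zero (x : ZMod n) : emb n x ≠ 0 := by
  intro h
  have := val_emb x
  rw [h, ZMod.val_zero] at this
  exact (repr1_pos x).ne this

theorem emb_injective : Injective (emb n) :=
  LeftInverse.injective (g := fun y => ((y.val : ℕ) : ZMod n)) fun x => by
    simp only [val_emb, natCast_repr1]

theorem eq_zero_or_exists_emb (y : ZMod (n + 1)) : y = 0 ∨ ∃ x, emb n x = y := by
  refine or_iff_not_imp_left.mpr fun hy => ⟨(y.val : ZMod n), ?_⟩
  rw [emb_natCast ((ZMod.val_ne_zero y).mpr hy).bot_lt (Nat.lt_succ_iff.mp (ZMod.val_lt y)),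
    ZMod.natCast_zmod_val]

theorem emb_sub_one {x : ZMod n} (hx : x ≠ 1) : emb n x - 1 = emb n (x - 1) := by
  set i := repr1 n x
  have hxi : x = (i : ZMod n) := (natCast_repr1 x).symm
  have hi : 2 ≤ i := by
    have : i ≠ 1 := fun h => hx (by rw [hxi, h, Nat.cast_one])
    have := repr1_pos x
    omega
  have hsub : x - 1 = ((i - 1 : ℕ) : ZMod n) := by
    rw [hxi, Nat.cast_sub (by omega : 1 ≤ i), Nat.cast_one]
  rw [hsub, emb_natCast (by omega) ((Nat.sub_le i 1).trans (repr1_le x)), emb,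
    Nat.cast_sub (by omega : 1 ≤ i), Nat.cast_one]

end Embedding

section Listing

variable {n : ℕ} (π : Equiv.Perm (ZMod n))

@[simp]
theorem listFun_zero : listFun n π 0 = 0 := by simp [listFun]

@[simp]
theorem listInv_zero : listInv n π 0 = 0 := by simp [listInv]

variable [NeZero n]

@[simp]
theorem listFun_emb (x : ZMod n) : listFun n π (emb n x) = emb n (π x) := by
  simp only [listFun, if_neg (emb_ne_zero x), val_emb, natCast_repr1]

@[simp]
theorem listInv_emb (y : ZMod n) : listInv n π (emb n y) = emb n (π.symm y) := by
  simp only [listInv, if_neg (emb_ne_zero y), val_emb, natCast_repr1]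

theorem listInv_listFun (y : ZMod (n + 1)) : listInv n π (listFun n π y) = y := by
  rcases eq_zero_or_exists_emb y with rfl | ⟨x, rfl⟩ <;> simp

theorem listFun_listInv (y : ZMod (n + 1)) : listFun n π (listInv n π y) = y := by
  rcases eq_zero_or_exists_emb y with rfl | ⟨x, rfl⟩ <;> simp

theorem Cfun_injective : Injective (Cfun n π) :=
  (LeftInverse.injective (listInv_listFun π)).comp <| (sub_left_injective (b := 1)).comp <|
    (LeftInverse.injective (listFun_listInv π)).comp (add_left_injective 1)

theorem Cfun_zero : Cfun n π 0 = listFun n π (emb n (π.symm 1) - 1) := by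
  simp [Cfun, Yfun, ← emb_one]

end Listing

section StrategicPile

variable {n : ℕ} (π : Equiv.Perm (ZMod n))

theorem strategicPile_eq_image {m : ℕ} (hm0 : 0 < m)
    (hm : (Cfun n π)^[m] (n : ZMod (n + 1)) = 0)
    (hmin : ∀ j, 0 < j → j < m → (Cfun n π)^[j] (n : ZMod (n + 1)) ≠ 0) :
    strategicPile n π = (fun k => (Cfun n π)^[k] (n : ZMod (n + 1))) '' Set.Ioo 0 m := by
  ext y
  constructor
  · rintro ⟨k, m', hk, hkm', hm', hmin', rfl⟩
    have hmm' : m' = m := by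
      by_contra hne
      rcases Nat.lt_or_gt_of_ne hne with h | h
      · exact hmin m' (by omega) h hm'
      · exact hmin' m hm0 h hm
    exact ⟨k, ⟨hk, hmm' ▸ hkm'⟩, rfl⟩
  · rintro ⟨k, ⟨hk, hkm⟩, rfl⟩
    exact ⟨k, m, hk, hkm, hm, hmin, rfl⟩

theorem ncard_strategicPile {m : ℕ} (hm0 : 0 < m)
    (hm : (Cfun n π)^[m] (n : ZMod (n + 1)) = 0)
    (hmin : ∀ j, 0 < j → j < m → (Cfun n π)^[j] (n : ZMod (n + 1)) ≠ 0)
    (hper : m < minimalPeriod (Cfun n π) (n : ZMod (n + 1))) :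
    (strategicPile n π).ncard = m - 1 := by
  have hinj : Set.InjOn (fun k => (Cfun n π)^[k] (n : ZMod (n + 1))) (Set.Ioo 0 m) :=
    iterate_injOn_Iio_minimalPeriod.mono fun k hk => hk.2.trans hper
  rw [strategicPile_eq_image π hm0 hm hmin, hinj.ncard_image, ← Finset.coe_Ioo,
    Set.ncard_coe_finset, Nat.card_Ioo, Nat.sub_zero]

theorem Cfun_zero_eq_of_ncard_strategicPile [NeZero n] (hn : 2 ≤ n)
    (hmax : (strategicPile n π).ncard = n - 1) : Cfun n π 0 = n := by
  obtain ⟨-, k, m, hk, hkm, hm, hmin, -⟩ : (strategicPile n π).Nonempty :=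
    Set.nonempty_of_ncard_ne_zero (by omega)
  have hinj := Cfun_injective π
  have hper :=
    lt_minimalPeriod_of_iterate_ne (hinj.mem_periodicPts _) natCast_ne_zero_zmod_succ hm hmin
  have hmn : m = n := by
    have := ncard_strategicPile π (hk.trans hkm) hm hmin hper
    omega
  subst hmn
  exact apply_eq_of_iterate_ne_of_card_eq hinj (ZMod.card _) natCast_ne_zero_zmod_succ hm hmin

end StrategicPile

theorem stmt0_general (n : ℕ) (hn : 0 < n) (π : Equiv.Perm (ZMod n))
    (hmax : (strategicPile n π).ncard = n - 1)
    (k : ZMod n) (hk : π k = (n : ZMod n)) :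
    π (k + 1) = 1 := by
  have : NeZero n := ⟨hn.ne'⟩
  rcases (Nat.one_le_iff_ne_zero.mpr hn.ne').eq_or_lt with rfl | hn2
  · exact Subsingleton.elim _ _
  set a := π.symm 1
  have hC : listFun n π (emb n a - 1) = n :=
    (Cfun_zero π).symm.trans (Cfun_zero_eq_of_ncard_strategicPile π hn2 hmax)
  have ha : a ≠ 1 := by
    intro ha
    rw [ha, emb_one, sub_self, listFun_zero] at hC
    exact natCast_ne_zero_zmod_succ hC.symm
  rw [emb_sub_one ha, listFun_emb, ← emb_zero] at hC
  rw [ZMod.natCast_self] at hk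
  have hka : k = a - 1 := π.injective (hk.trans (emb_injective hC).symm)
  rw [hka, sub_add_cancel, Equiv.apply_symm_apply]

/-- If `n` is even and `π ∈ S_n` has maximal strategic pile `|SP(π)| = n-1`,
and `π(k) = n`, then `π(k+1) = 1`. -/
theorem stmt0 (n : ℕ) (hn : 0 < n) (hne : Even n) (π : Equiv.Perm (ZMod n))
    (hmax : (strategicPile n π).ncard = n - 1)
    (k : ZMod n) (hk : π k = (n : ZMod n)) :
    π (k + 1) = 1 :=
  stmt0_general n hn π hmax k hk
end

section
/- Let π ∈ S_n have difference sequence periodic with period p, and let a, b ∈ Z_n both be nonzero and satisfy C_a(T_b(π)) = π. Then a is an integer multiple of p (i.e. p divides the representative of a). -/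
/-!
`C_a(T_b(π)) = π` says `π(x + a) = π(x) + b`, so the difference sequence is invariant under
the shift by `a`. The shifts fixing a function on `Z_n` are closed under subtraction, so
the shift by `a mod p` fixes `D_π` as well, and minimality of `p` forces `a mod p = 0`.
-/

open Function

theorem Function.Periodic.natCast_mod {R β : Type*} [Ring R] {f : R → β} {c p : ℕ}
    (hc : Periodic f c) (hp : Periodic f p) : Periodic f ((c % p : ℕ) : R) := by
  have hmod : ((c % p : ℕ) : R) = c - ((c / p : ℕ) : R) * p := by
    rw [eq_sub_iff_add_eq, ← Nat.cast_mul, ← Nat.cast_add, Nat.mod_add_div']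
  rw [hmod]
  exact hc.sub_period (hp.nat_mul _)

theorem Dseq_periodic_of_Cshift_Tshift_eq {n : ℕ} {π : Equiv.Perm (ZMod n)} {a b : ZMod n}
    (heq : Cshift n a (Tshift n b π) = π) : Periodic (Dseq n π) a := by
  have hshift : ∀ x, π (x + a) = π x + b := fun x => by
    simpa [Cshift, Tshift] using (DFunLike.congr_fun heq (x + a)).symm
  intro k
  simp only [Dseq, add_right_comm k a 1, hshift, add_sub_add_right_eq_sub]

theorem PeriodicWith.dvd_of_periodic {n : ℕ} {π : Equiv.Perm (ZMod n)} {p c : ℕ}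
    (hper : PeriodicWith n π p) (hc : Periodic (Dseq n π) c) : p ∣ c := by
  obtain ⟨hp0, -, hp, hmin⟩ := hper
  by_contra hdvd
  exact hmin (c % p) (Nat.pos_of_ne_zero (mt Nat.dvd_of_mod_eq_zero hdvd))
    (Nat.mod_lt c hp0) (hc.natCast_mod hp)

theorem stmt4_general (n : ℕ) (π : Equiv.Perm (ZMod n)) (p : ℕ)
    (hper : PeriodicWith n π p) (a b : ZMod n)
    (heq : Cshift n a (Tshift n b π) = π) :
    p ∣ a.val := by
  have : NeZero n := ⟨by have := hper.2.1; omega⟩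
  apply hper.dvd_of_periodic
  rw [ZMod.natCast_zmod_val]
  exact Dseq_periodic_of_Cshift_Tshift_eq heq

/-- Let `π ∈ S_n` have difference sequence periodic with period `p`, and let
`a, b ∈ Z_n` both be nonzero and satisfy `C_a(T_b(π)) = π`.  Then `p` divides the
representative of `a`. -/
theorem stmt4 (n : ℕ) (hn : 0 < n) (π : Equiv.Perm (ZMod n)) (p : ℕ)
    (hper : PeriodicWith n π p) (a b : ZMod n) (ha : a ≠ 0) (hb : b ≠ 0)
    (heq : Cshift n a (Tshift n b π) = π) :
    p ∣ a.val :=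
  stmt4_general n π p hper a b heq
end

section
/- Let π ∈ M_{2n,k}. Then the stabilizer Stab(π) of π under the action φ′ of Z_{2n−1} × Z_{2n−1} is a cyclic group; moreover, if the difference sequence D_π is periodic with period p, then Stab(π) is generated by the element (p, π(p+1) − π(1)). -/
/-!
The pair `(a, b)` fixes `π` exactly when `π (x + a) = π x + b` for all `x`, i.e. when `a` is a
period of the difference sequence `D_π` and `b = π (a + 1) - π 1`. So the stabilizer is the graph
of a function on the group of periods of `D_π`, and projecting to the first coordinate identifies
it with that group. As a subgroup of the cyclic group `ℤ/(2n-1)`, the group of periods is cyclic,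
generated by the least positive period when there is one.
-/

open Function

theorem ZMod.apply_eq_apply_of_periodic_one {m : ℕ} {β : Type*} {f : ZMod m → β}
    (hf : Periodic f 1) (x y : ZMod m) : f x = f y := by
  have key (z : ZMod m) : f z = f 0 := by
    rw [← ZMod.intCast_zmod_cast z, ← mul_one ((z.cast : ℤ) : ZMod m)]
    exact hf.int_mul_eq _
  rw [key x, key y]

def periodSubgroup {G β : Type*} [AddGroup G] (f : G → β) : AddSubgroup G where
  carrier := {c | Periodic f c}
  zero_mem' := fun x => congrArg f (add_zero x)
  add_mem' := Periodic.add_period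
  neg_mem' := Periodic.neg

theorem ZMod.le_zmultiples_of_minimal {m : ℕ} [NeZero m] (P : AddSubgroup (ZMod m)) {p : ℕ}
    (hp0 : 0 < p) (hp : (p : ZMod m) ∈ P) (hmin : ∀ q : ℕ, 0 < q → q < p → (q : ZMod m) ∉ P) :
    P ≤ AddSubgroup.zmultiples (p : ZMod m) := by
  intro a ha
  have hrem : ((a.val % p : ℕ) : ZMod m) ∈ P := by
    have : ((a.val % p : ℕ) : ZMod m) = a - ((a.val / p : ℕ) : ℤ) • (p : ZMod m) := by
      rw [eq_sub_iff_add_eq, natCast_zsmul, nsmul_eq_mul, ← Nat.cast_mul, ← Nat.cast_add,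
        Nat.mod_add_div', ZMod.natCast_zmod_val]
    rw [this]
    exact sub_mem ha (zsmul_mem hp _)
  have hdvd : p ∣ a.val := by
    by_contra h
    exact hmin _ (Nat.pos_of_ne_zero (mt Nat.dvd_of_mod_eq_zero h)) (Nat.mod_lt _ hp0) hrem
  refine AddSubgroup.mem_zmultiples_iff.mpr ⟨(a.val / p : ℕ), ?_⟩
  rw [natCast_zsmul, nsmul_eq_mul, ← Nat.cast_mul, Nat.div_mul_cancel hdvd, ZMod.natCast_zmod_val]

section Stabilizer

variable {m : ℕ} (π : Equiv.Perm (ZMod m))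

theorem phiAct_eq_self_iff (a b : ZMod m) :
    phiAct m a b π = π ↔ ∀ x, π (x + a) = π x + b := by
  rw [Equiv.ext_iff, ← (Equiv.addRight a).forall_congr_right]
  simp [phiAct, Cshift, Tshift, eq_comm]

theorem phiAct_eq_self_iff_periodic (a b : ZMod m) :
    phiAct m a b π = π ↔ Periodic (Dseq m π) a ∧ b = π (a + 1) - π 1 := by
  rw [phiAct_eq_self_iff]
  constructor
  · intro h
    refine ⟨fun k => ?_, ?_⟩
    · simp only [Dseq]
      rw [add_right_comm, h, h]
      ring
    · rw [add_comm, h]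
      ring
  · rintro ⟨ha, rfl⟩ x
    have hstep : Periodic (fun y => π (y + a) - π y) 1 := fun y => by
      simpa only [Dseq, add_right_comm y 1 a, sub_eq_sub_iff_sub_eq_sub] using ha y
    have := ZMod.apply_eq_apply_of_periodic_one hstep x 1
    simp only [add_comm 1 a] at this
    linear_combination this

def phiStabilizer : AddSubgroup (ZMod m × ZMod m) where
  carrier := {x | phiAct m x.1 x.2 π = π}
  zero_mem' := by
    simp [phiAct_eq_self_iff]
  add_mem' := by
    rintro ⟨a, b⟩ ⟨a', b'⟩ h h'
    change phiAct m a b π = π at h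
    change phiAct m a' b' π = π at h'
    change phiAct m (a + a') (b + b') π = π
    rw [phiAct_eq_self_iff] at h h' ⊢
    intro x
    rw [← add_assoc, h', h, add_assoc]
  neg_mem' := by
    rintro ⟨a, b⟩ h
    change phiAct m a b π = π at h
    change phiAct m (-a) (-b) π = π
    rw [phiAct_eq_self_iff] at h ⊢
    intro x
    rw [eq_add_neg_iff_add_eq, ← h, neg_add_cancel_right]

theorem mem_phiStabilizer_iff (x : ZMod m × ZMod m) :
    x ∈ phiStabilizer π ↔ x.1 ∈ periodSubgroup (Dseq m π) ∧ x.2 = π (x.1 + 1) - π 1 :=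
  phiAct_eq_self_iff_periodic π x.1 x.2

theorem phiStabilizer_eq_zmultiples {g : ZMod m}
    (hg : periodSubgroup (Dseq m π) = AddSubgroup.zmultiples g) :
    phiStabilizer π = AddSubgroup.zmultiples (g, π (g + 1) - π 1) := by
  have hgen : (g, π (g + 1) - π 1) ∈ phiStabilizer π :=
    (mem_phiStabilizer_iff π _).mpr ⟨hg ▸ AddSubgroup.mem_zmultiples g, rfl⟩
  refine le_antisymm (fun x hx => ?_) (AddSubgroup.zmultiples_le.mpr hgen)
  obtain ⟨hper, hsnd⟩ := (mem_phiStabilizer_iff π x).mp hx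
  obtain ⟨t, ht⟩ := AddSubgroup.mem_zmultiples_iff.mp (hg ▸ hper)
  have hmul := (mem_phiStabilizer_iff π _).mp (zsmul_mem hgen t)
  refine AddSubgroup.mem_zmultiples_iff.mpr ⟨t, Prod.ext ht ?_⟩
  rw [hmul.2, hsnd, Prod.smul_fst, ht]

end Stabilizer

theorem stmt5_general (n : ℕ) (π : Equiv.Perm (ZMod (2 * n - 1))) :
    (∃ g : ZMod (2 * n - 1) × ZMod (2 * n - 1),
      ∀ x : ZMod (2 * n - 1) × ZMod (2 * n - 1),
        phiAct (2 * n - 1) x.1 x.2 π = π ↔ x ∈ AddSubgroup.zmultiples g) ∧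
    (∀ p : ℕ, PeriodicWith (2 * n - 1) π p →
      ∀ x : ZMod (2 * n - 1) × ZMod (2 * n - 1),
        phiAct (2 * n - 1) x.1 x.2 π = π ↔
          x ∈ AddSubgroup.zmultiples
            (((p : ZMod (2 * n - 1)), π ((p : ZMod (2 * n - 1)) + 1) - π 1))) := by
  refine ⟨?_, fun p ⟨hp0, hpm, hper, hmin⟩ x => ?_⟩
  · obtain ⟨g, hg⟩ :=
      (AddSubgroup.isAddCyclic_iff_exists_zmultiples_eq_top _).mp (inferInstance :
        IsAddCyclic (periodSubgroup (Dseq (2 * n - 1) π)))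
    exact ⟨_, SetLike.ext_iff.mp (phiStabilizer_eq_zmultiples π hg.symm)⟩
  · have : NeZero (2 * n - 1) := ⟨by omega⟩
    have hP := le_antisymm
      (ZMod.le_zmultiples_of_minimal (periodSubgroup (Dseq (2 * n - 1) π)) hp0 hper hmin)
      (AddSubgroup.zmultiples_le.mpr hper)
    exact SetLike.ext_iff.mp (phiStabilizer_eq_zmultiples π hP) x

/-- For `π ∈ M_{2n,k}`, the stabilizer of `π` under the
`Z_{2n-1} × Z_{2n-1}`-action `φ` is cyclic; moreover, if `D_π` is periodic with period `p`,
it is generated by `(p, π(p+1) - π(1))`. -/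
theorem stmt5 (n k : ℕ) (hn : 0 < n) (π : Equiv.Perm (ZMod (2 * n - 1)))
    (hπ : π ∈ Mset n k) :
    (∃ g : ZMod (2 * n - 1) × ZMod (2 * n - 1),
      ∀ x : ZMod (2 * n - 1) × ZMod (2 * n - 1),
        phiAct (2 * n - 1) x.1 x.2 π = π ↔ x ∈ AddSubgroup.zmultiples g) ∧
    (∀ p : ℕ, PeriodicWith (2 * n - 1) π p →
      ∀ x : ZMod (2 * n - 1) × ZMod (2 * n - 1),
        phiAct (2 * n - 1) x.1 x.2 π = π ↔
          x ∈ AddSubgroup.zmultiples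
            (((p : ZMod (2 * n - 1)), π ((p : ZMod (2 * n - 1)) + 1) - π 1))) :=
  stmt5_general n π
end
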